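/- arXiv:2209.06200 — 2 statements merged into one kernel-verified Lean document; each statement's English description precedes it below -/
import Mathlib

section
/- The inverse of the resolvent composition equals the resolvent cocomposition of the inverse: (L ▷ B)⁻¹ = L ▶ (B⁻¹) = (Id_H − L* ∘ J_B ∘ L)⁻¹ − Id_H. -/
open scoped RealInnerProductSpace

noncomputable section

/-- Inverse of a set-valued operator. -/
def svInv {α β : Type*} (A : α → Set β) : β → Set α := fun y => {x | y ∈ A x}

/-- `A + Id`. -/
def plusId {E : Type*} [AddGroup E] (A : E → Set E) : E → Set E :=
  fun x => (fun u => u + x) '' A x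

/-- `A - Id`. -/
def minusId {E : Type*} [AddGroup E] (A : E → Set E) : E → Set E :=
  fun x => (fun u => u - x) '' A x

/-- Resolvent `J_A = (A + Id)⁻¹`. -/
def svResolvent {E : Type*} [AddGroup E] (A : E → Set E) : E → Set E :=
  svInv (plusId A)

/-- `L* ∘ A ∘ L` as a set-valued operator. -/
def svComp {H G : Type*} [NormedAddCommGroup H] [InnerProductSpace ℝ H] [CompleteSpace H]
    [NormedAddCommGroup G] [InnerProductSpace ℝ G] [CompleteSpace G]
    (L : H →L[ℝ] G) (A : G → Set G) : H → Set H :=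
  fun x => (ContinuousLinearMap.adjoint L) '' A (L x)

/-- Parallel composition `L* ▹ A = (L* ∘ A⁻¹ ∘ L)⁻¹`. -/
def parComp {H G : Type*} [NormedAddCommGroup H] [InnerProductSpace ℝ H] [CompleteSpace H]
    [NormedAddCommGroup G] [InnerProductSpace ℝ G] [CompleteSpace G]
    (L : H →L[ℝ] G) (A : G → Set G) : H → Set H :=
  svInv (svComp L (svInv A))

/-- Resolvent composition `L ▷ B = L* ▹ (B + Id) - Id`. -/
def rcomp {H G : Type*} [NormedAddCommGroup H] [InnerProductSpace ℝ H] [CompleteSpace H]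
    [NormedAddCommGroup G] [InnerProductSpace ℝ G] [CompleteSpace G]
    (L : H →L[ℝ] G) (B : G → Set G) : H → Set H :=
  minusId (parComp L (plusId B))

/-- Resolvent cocomposition `L ▶ B = (L ▷ B⁻¹)⁻¹`. -/
def ccomp {H G : Type*} [NormedAddCommGroup H] [InnerProductSpace ℝ H] [CompleteSpace H]
    [NormedAddCommGroup G] [InnerProductSpace ℝ G] [CompleteSpace G]
    (L : H →L[ℝ] G) (B : G → Set G) : H → Set H :=
  svInv (rcomp L (svInv B))

/-- Monotonicity of a set-valued operator. -/
def SVMonotone {E : Type*} [NormedAddCommGroup E] [InnerProductSpace ℝ E]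
    (A : E → Set E) : Prop :=
  ∀ x₁ u₁ x₂ u₂, u₁ ∈ A x₁ → u₂ ∈ A x₂ → 0 ≤ ⟪x₁ - x₂, u₁ - u₂⟫

/-- Maximal monotonicity of a set-valued operator. -/
def SVMaxMonotone {E : Type*} [NormedAddCommGroup E] [InnerProductSpace ℝ E]
    (A : E → Set E) : Prop :=
  SVMonotone A ∧ ∀ x u, (∀ y v, v ∈ A y → 0 ≤ ⟪x - y, u - v⟫) → u ∈ A x

/- Both identities are relation algebra. The first is `B⁻¹⁻¹ = B`. For the second, `L ▷ B = C⁻¹ − Id`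
with `C = L* ∘ J_B ∘ L`, and for any `C` on an additive group the graphs of `(C⁻¹ − Id)⁻¹` and of
`(Id − C)⁻¹ − Id` are both `{(w − x, x) | x ∈ C w}`. -/

theorem mem_svInv {α β : Type*} {A : α → Set β} {x : α} {y : β} : x ∈ svInv A y ↔ y ∈ A x :=
  Iff.rfl

theorem svInv_svInv {α β : Type*} (A : α → Set β) : svInv (svInv A) = A :=
  rfl

theorem mem_minusId {E : Type*} [AddGroup E] {A : E → Set E} {x u : E} :
    u ∈ minusId A x ↔ ∃ w ∈ A x, w - x = u :=
  Iff.rfl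

theorem svInv_minusId_svInv {E : Type*} [AddCommGroup E] (C : E → Set E) :
    svInv (minusId (svInv C)) = minusId (svInv (fun x => (fun u => x - u) '' C x)) := by
  ext u x
  simp only [mem_svInv, mem_minusId, Set.mem_image]
  constructor
  · rintro ⟨w, hx, rfl⟩
    exact ⟨w, ⟨x, hx, rfl⟩, sub_sub_cancel w x⟩
  · rintro ⟨t, ⟨s, hs, rfl⟩, rfl⟩
    exact ⟨t, by rwa [sub_sub_cancel], by rw [sub_sub_cancel]⟩

variable {H G : Type*}
  [NormedAddCommGroup H] [InnerProductSpace ℝ H] [CompleteSpace H]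
  [NormedAddCommGroup G] [InnerProductSpace ℝ G] [CompleteSpace G]

theorem ccomp_svInv (L : H →L[ℝ] G) (B : G → Set G) :
    ccomp L (svInv B) = svInv (rcomp L B) := by
  rw [ccomp, svInv_svInv]

theorem rcomp_eq_minusId_svInv_svComp_svResolvent (L : H →L[ℝ] G) (B : G → Set G) :
    rcomp L B = minusId (svInv (svComp L (svResolvent B))) :=
  rfl

/-- `(L ▷ B)⁻¹ = L ▶ (B⁻¹) = (Id − L* ∘ J_B ∘ L)⁻¹ − Id`. -/
theorem inv_rcomp (L : H →L[ℝ] G) (B : G → Set G) :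
    svInv (rcomp L B) = ccomp L (svInv B) ∧
    svInv (rcomp L B) =
      minusId (svInv (fun x => (fun u => x - u) '' svComp L (svResolvent B) x)) :=
  ⟨(ccomp_svInv L B).symm, by
    rw [rcomp_eq_minusId_svInv_svComp_svResolvent, svInv_minusId_svInv]⟩
end
end

section
/- If ‖L‖ ≤ 1 and B : G → 2^G is maximally monotone, then the resolvent composition L ▷ B : H → 2^H is maximally monotone. -/
/-!
If `u₁ + x₁ = z₁`, `x₁ = L* w₁` with `L z₁ - w₁ ∈ B w₁` (and likewise with index 2), monotonicity
of `B` gives `⟪x₁ - x₂, u₁ - u₂⟫ ≥ ‖w₁ - w₂‖² - ‖L* (w₁ - w₂)‖² ≥ 0`, since `‖L*‖ = ‖L‖ ≤ 1`.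
For maximality it suffices, by the easy half of Minty's theorem, that every `g` lies in
`(L ▷ B + Id) x` for some `x`: Minty's theorem for `B` yields `w` with `L g - w ∈ B w`, and then
`x = L* w` works. Minty's theorem is derived from the Kirszbraun–Valentine extension theorem,
proved for finitely many points by a descent argument on a convex hull and in general by weak
compactness of closed balls.
-/

open scoped RealInnerProductSpace

noncomputable section

variable {H G : Type*}
  [NormedAddCommGroup H] [InnerProductSpace ℝ H] [CompleteSpace H]
  [NormedAddCommGroup G] [InnerProductSpace ℝ G] [CompleteSpace G]

open Metric Filter Topology Finset

section WeakTopology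

open InnerProductSpace

variable {E : Type*} [NormedAddCommGroup E] [InnerProductSpace ℝ E]

theorem Convex.isClosed_toWeakSpace_image {s : Set E} (hs : Convex ℝ s) (hc : IsClosed s) :
    IsClosed (toWeakSpace ℝ E '' s) := by
  rw [← hc.closure_eq, hs.toWeakSpace_closure ℝ]
  exact isClosed_closure

variable [CompleteSpace E]

noncomputable def weakSpaceHomeomorphWeakDual : WeakSpace ℝ E ≃ₜ WeakDual ℝ E where
  toFun v := StrongDual.toWeakDual (toDual ℝ E ((toWeakSpace ℝ E).symm v))
  invFun φ := toWeakSpace ℝ E ((toDual ℝ E).symm (WeakDual.toStrongDual φ))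
  left_inv v := by simp
  right_inv φ := by simp
  continuous_toFun := WeakDual.continuous_of_continuous_eval fun x =>
    (WeakBilin.eval_continuous (topDualPairing ℝ E).flip (toDual ℝ E x)).congr fun _ =>
      real_inner_comm _ _
  continuous_invFun := WeakBilin.continuous_of_continuous_eval _ fun f =>
    (WeakDual.eval_continuous ((toDual ℝ E).symm f)).congr fun φ => by
      change _ = f ((toDual ℝ E).symm (WeakDual.toStrongDual φ))
      rw [← toDual_symm_apply (y := f), real_inner_comm, toDual_symm_apply]
      rfl

theorem isCompact_toWeakSpace_closedBall (x : E) (r : ℝ) :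
    IsCompact (toWeakSpace ℝ E '' closedBall x r) := by
  convert weakSpaceHomeomorphWeakDual.isCompact_preimage.2
    (WeakDual.isCompact_closedBall (toDual ℝ E x) r)
  ext v
  simp only [LinearEquiv.image_eq_preimage_symm, Set.mem_preimage, mem_closedBall,
    weakSpaceHomeomorphWeakDual]
  rw [← (toDual ℝ E).dist_map]
  rfl

theorem Convex.nonempty_iInter_of_isBounded {ι : Type*} {t : ι → Set E}
    (hconv : ∀ i, Convex ℝ (t i)) (hclosed : ∀ i, IsClosed (t i)) (i₀ : ι)
    (hbdd : Bornology.IsBounded (t i₀)) (hfin : ∀ u : Finset ι, (⋂ i ∈ u, t i).Nonempty) :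
    (⋂ i, t i).Nonempty := by
  classical
  obtain ⟨R, hR⟩ := hbdd.subset_closedBall 0
  have hweak := (isCompact_toWeakSpace_closedBall 0 R).inter_iInter_nonempty
    (fun i => toWeakSpace ℝ E '' t i) (fun i => (hconv i).isClosed_toWeakSpace_image (hclosed i))
    fun u => by
      obtain ⟨x, hx⟩ := hfin (insert i₀ u)
      simp only [Set.mem_iInter, Finset.mem_insert] at hx
      refine ⟨toWeakSpace ℝ E x, Set.mem_image_of_mem _ (hR (hx i₀ (.inl rfl))), ?_⟩
      simp only [Set.mem_iInter]
      exact fun i hi => Set.mem_image_of_mem _ (hx i (.inr hi))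
  simp only [LinearEquiv.image_eq_preimage_symm, ← Set.preimage_iInter] at hweak
  obtain ⟨v, -, hv⟩ := hweak
  exact ⟨_, hv⟩

end WeakTopology

section Kirszbraun

variable {E : Type*} [NormedAddCommGroup E] [InnerProductSpace ℝ E] {ι : Type*}

theorem le_norm_sum_smul_sq_of_le_inner {κ : Type*} [Fintype κ] {w : κ → ℝ}
    (hw₀ : ∀ j, 0 ≤ w j) (hw₁ : ∑ j, w j = 1) {a b : κ → E} {μ : ℝ}
    (h : ∀ j k, μ + ⟪b j, b k⟫ ≤ ⟪a j, a k⟫) : μ ≤ ‖∑ j, w j • a j‖ ^ 2 := by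
  have expand (c : κ → E) : ‖∑ j, w j • c j‖ ^ 2 = ∑ j, ∑ k, w j * w k * ⟪c j, c k⟫ := by
    simp_rw [← real_inner_self_eq_norm_sq, sum_inner, inner_sum, real_inner_smul_left,
      real_inner_smul_right, mul_assoc]
  calc μ ≤ μ + ‖∑ j, w j • b j‖ ^ 2 := le_add_of_nonneg_right (sq_nonneg _)
    _ = ∑ j, ∑ k, w j * w k * (μ + ⟪b j, b k⟫) := by
      simp_rw [mul_add, sum_add_distrib, ← sum_mul, ← sum_mul_sum, hw₁, one_mul, expand]
    _ ≤ ∑ j, ∑ k, w j * w k * ⟪a j, a k⟫ := sum_le_sum fun j _ => sum_le_sum fun k _ =>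
      mul_le_mul_of_nonneg_left (h j k) (mul_nonneg (hw₀ j) (hw₀ k))
    _ = ‖∑ j, w j • a j‖ ^ 2 := (expand a).symm

theorem inner_le_inner_of_norm_sub_le {q g y y' s s' : E} {μ : ℝ} (hy : ‖y - y'‖ ≤ ‖s - s'‖)
    (h : ‖q - y‖ ^ 2 = μ + ‖g - s‖ ^ 2) (h' : ‖q - y'‖ ^ 2 = μ + ‖g - s'‖ ^ 2) :
    μ + ⟪g - s, g - s'⟫ ≤ ⟪q - y, q - y'⟫ := by
  have hq := norm_sub_sq_real (q - y) (q - y')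
  have hg := norm_sub_sq_real (g - s) (g - s')
  rw [sub_sub_sub_cancel_left, norm_sub_rev] at hq hg
  nlinarith [pow_le_pow_left₀ (norm_nonneg _) hy 2]

theorem le_norm_sub_sq_of_mem_convexHull {I : Set ι} {s y : ι → E} {q g z : E} {μ : ℝ}
    (hlip : ∀ i ∈ I, ∀ j ∈ I, ‖y i - y j‖ ≤ ‖s i - s j‖)
    (hact : ∀ i ∈ I, ‖q - y i‖ ^ 2 = μ + ‖g - s i‖ ^ 2) (hz : z ∈ convexHull ℝ (y '' I)) :
    μ ≤ ‖q - z‖ ^ 2 := by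
  obtain ⟨κ, _, w, z, hw₀, hw₁, hzI, rfl⟩ := mem_convexHull_iff_exists_fintype.1 hz
  choose f hfI hfy using hzI
  have hsum : q - ∑ j, w j • z j = ∑ j, w j • (q - y (f j)) := by
    simp_rw [smul_sub, sum_sub_distrib, ← sum_smul, hw₁, one_smul, hfy]
  rw [hsum]
  exact le_norm_sum_smul_sq_of_le_inner (b := fun j => g - s (f j)) hw₀ hw₁ fun j k =>
    inner_le_inner_of_norm_sub_le (hlip _ (hfI j) _ (hfI k)) (hact _ (hfI j)) (hact _ (hfI k))

theorem eventually_sup'_lt_of_inner_neg {F : Finset ι} (hF : F.Nonempty) (y : ι → E) (c : ι → ℝ)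
    {q d : E} (hd : ∀ i ∈ F, ‖q - y i‖ ^ 2 - c i = F.sup' hF (fun j => ‖q - y j‖ ^ 2 - c j) →
      ⟪q - y i, d⟫ < 0) :
    ∀ᶠ t in 𝓝[>] (0 : ℝ), F.sup' hF (fun j => ‖q + t • d - y j‖ ^ 2 - c j) <
      F.sup' hF (fun j => ‖q - y j‖ ^ 2 - c j) := by
  suffices h : ∀ j ∈ F, ∀ᶠ t in 𝓝[>] (0 : ℝ), ‖q + t • d - y j‖ ^ 2 - c j <
      F.sup' hF (fun j => ‖q - y j‖ ^ 2 - c j) by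
    filter_upwards [(eventually_all_finset F).2 h] with t ht using (sup'_lt_iff hF).2 ht
  intro j hj
  have hexp (t : ℝ) : ‖q + t • d - y j‖ ^ 2 - c j =
      (‖q - y j‖ ^ 2 - c j) + t * (2 * ⟪q - y j, d⟫ + t * ‖d‖ ^ 2) := by
    rw [show q + t • d - y j = (q - y j) + t • d by abel, norm_add_sq_real, real_inner_smul_right,
      norm_smul, mul_pow, Real.norm_eq_abs, sq_abs]
    ring
  rcases (le_sup' (fun j => ‖q - y j‖ ^ 2 - c j) hj).eq_or_lt with hact | hinact
  · have hslope : Tendsto (fun t : ℝ => 2 * ⟪q - y j, d⟫ + t * ‖d‖ ^ 2) (𝓝[>] 0)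
        (𝓝 (2 * ⟪q - y j, d⟫)) := by
      have : Continuous fun t : ℝ => 2 * ⟪q - y j, d⟫ + t * ‖d‖ ^ 2 := by fun_prop
      simpa using (this.tendsto 0).mono_left nhdsWithin_le_nhds
    have hneg : 2 * ⟪q - y j, d⟫ < 0 := by linarith [hd j hj hact]
    filter_upwards [self_mem_nhdsWithin, hslope.eventually (gt_mem_nhds hneg)] with t ht hslope_neg
    rw [hexp, hact]
    linarith [mul_neg_of_pos_of_neg (Set.mem_Ioi.1 ht) hslope_neg]
  · have hcont : Continuous fun t : ℝ => ‖q + t • d - y j‖ ^ 2 - c j := by fun_prop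
    exact ((hcont.tendsto' 0 _ (by simp)).eventually (gt_mem_nhds hinact)).filter_mono
      nhdsWithin_le_nhds

/- `q` minimises the largest excess `‖q - y i‖ ^ 2 - ‖g - s i‖ ^ 2` over the convex hull. If that
excess were positive, `q` would lie at positive distance from the hull of the active points, and
moving towards its nearest point `p` there would decrease every active excess. -/
theorem kirszbraun_finset (F : Finset ι) (s y : ι → E)
    (hlip : ∀ i ∈ F, ∀ j ∈ F, ‖y i - y j‖ ≤ ‖s i - s j‖) (g : E) :
    ∃ q, ∀ i ∈ F, ‖q - y i‖ ≤ ‖g - s i‖ := by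
  rcases F.eq_empty_or_nonempty with rfl | hF
  · exact ⟨g, by simp⟩
  set φ : E → ℝ := fun q => F.sup' hF fun i => ‖q - y i‖ ^ 2 - ‖g - s i‖ ^ 2
  set K := convexHull ℝ (y '' F)
  obtain ⟨i₀, hi₀⟩ := id hF
  obtain ⟨q, hqK, hqmin⟩ := (F.finite_toSet.image y).isCompact_convexHull ℝ |>.exists_isMinOn
    ⟨y i₀, subset_convexHull ℝ _ (Set.mem_image_of_mem y hi₀)⟩
    (show Continuous φ by fun_prop).continuousOn
  refine ⟨q, fun i hi => ?_⟩
  suffices hμ : φ q ≤ 0 by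
    have := (le_sup' (fun i => ‖q - y i‖ ^ 2 - ‖g - s i‖ ^ 2) hi).trans hμ
    exact (pow_le_pow_iff_left₀ (norm_nonneg _) (norm_nonneg _) two_ne_zero).1 (by linarith)
  by_contra! hμ
  set I : Set ι := {i | i ∈ F ∧ ‖q - y i‖ ^ 2 - ‖g - s i‖ ^ 2 = φ q}
  have hIF : I ⊆ F := fun i hi => hi.1
  set C := convexHull ℝ (y '' I)
  have hCK : C ⊆ K := convexHull_mono (Set.image_mono hIF)
  have hCne : C.Nonempty := by
    obtain ⟨i, hi, hmax⟩ := exists_mem_eq_sup' hF fun i => ‖q - y i‖ ^ 2 - ‖g - s i‖ ^ 2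
    exact ⟨y i, subset_convexHull ℝ _ (Set.mem_image_of_mem y ⟨hi, hmax.symm⟩)⟩
  obtain ⟨p, hpC, hp⟩ := exists_norm_eq_iInf_of_complete_convex hCne
    (((F.finite_toSet.subset hIF).image y).isCompact_convexHull ℝ).isComplete
    (convex_convexHull ℝ _) q
  rw [norm_eq_iInf_iff_real_inner_le_zero (convex_convexHull ℝ _) hpC] at hp
  have hqp : φ q ≤ ‖q - p‖ ^ 2 :=
    le_norm_sub_sq_of_mem_convexHull (fun i hi j hj => hlip i (hIF hi) j (hIF hj))
      (fun i hi => by linarith [hi.2]) hpC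
  have hdescent : ∀ i ∈ F, ‖q - y i‖ ^ 2 - ‖g - s i‖ ^ 2 = φ q → ⟪q - y i, p - q⟫ < 0 := by
    intro i hi hact
    have hobtuse := hp (y i) (subset_convexHull ℝ _ (Set.mem_image_of_mem y ⟨hi, hact⟩))
    have : ⟪q - y i, p - q⟫ = ⟪q - p, y i - p⟫ - ‖q - p‖ ^ 2 := by
      rw [show q - y i = (q - p) - (y i - p) by abel, show p - q = -(q - p) by abel,
        inner_neg_right, inner_sub_left, real_inner_self_eq_norm_sq, real_inner_comm]
      ring
    linarith
  obtain ⟨t, hlt, ht⟩ := ((eventually_sup'_lt_of_inner_neg hF y _ hdescent).and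
    (Ioo_mem_nhdsGT one_pos)).exists
  exact (hqmin ((convex_convexHull ℝ _).add_smul_sub_mem hqK (hCK hpC)
    ⟨ht.1.le, ht.2.le⟩)).not_gt hlt

theorem kirszbraun [CompleteSpace E] (s y : ι → E) (hlip : ∀ i j, ‖y i - y j‖ ≤ ‖s i - s j‖)
    (g : E) : ∃ q, ∀ i, ‖q - y i‖ ≤ ‖g - s i‖ := by
  rcases isEmpty_or_nonempty ι with hι | ⟨⟨i₀⟩⟩
  · exact ⟨g, isEmptyElim⟩
  have hfin (F : Finset ι) : (⋂ i ∈ F, closedBall (y i) ‖g - s i‖).Nonempty := by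
    obtain ⟨q, hq⟩ := kirszbraun_finset F s y (fun i _ j _ => hlip i j) g
    exact ⟨q, by simpa [dist_eq_norm] using hq⟩
  obtain ⟨q, hq⟩ := Convex.nonempty_iInter_of_isBounded (fun i => convex_closedBall _ _)
    (fun i => isClosed_closedBall) i₀ isBounded_closedBall hfin
  exact ⟨q, fun i => by simpa [dist_eq_norm] using Set.mem_iInter.1 hq i⟩

end Kirszbraun

section MaximalMonotone

variable {E : Type*} [NormedAddCommGroup E] [InnerProductSpace ℝ E]

theorem norm_sub_le_norm_add_of_inner_nonneg {a b : E} (h : 0 ≤ ⟪a, b⟫) : ‖a - b‖ ≤ ‖a + b‖ := by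
  refine (pow_le_pow_iff_left₀ (norm_nonneg _) (norm_nonneg _) two_ne_zero).1 ?_
  rw [norm_sub_sq_real, norm_add_sq_real]
  linarith

theorem SVMonotone.maxMonotone_of_exists_sub_mem {A : E → Set E} (hA : SVMonotone A)
    (h : ∀ g, ∃ x, g - x ∈ A x) : SVMaxMonotone A := by
  refine ⟨hA, fun x u hxu => ?_⟩
  obtain ⟨p, hp⟩ := h (x + u)
  have hle := hxu p _ hp
  rw [show u - (x + u - p) = -(x - p) by abel, inner_neg_right, neg_nonneg, real_inner_self_nonpos,
    sub_eq_zero] at hle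
  subst hle
  simpa using hp

/-- Minty's theorem. The points `x + u` and `x - u` with `u ∈ A x` are related by a nonexpansive
map, and `x = (g + q) / 2` where `q` is the value at `g` of a Kirszbraun extension. -/
theorem SVMaxMonotone.exists_sub_mem [CompleteSpace E] {A : E → Set E} (hA : SVMaxMonotone A)
    (g : E) : ∃ x, g - x ∈ A x := by
  obtain ⟨q, hq⟩ := kirszbraun (fun p : {p : E × E // p.2 ∈ A p.1} => p.1.1 + p.1.2)
    (fun p => p.1.1 - p.1.2) (fun p p' => by
      convert norm_sub_le_norm_add_of_inner_nonneg (hA.1 _ _ _ _ p.2 p'.2) using 2 <;> abel) g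
  refine ⟨(2 : ℝ)⁻¹ • (g + q), hA.2 _ _ fun x u hu => ?_⟩
  have hx := pow_le_pow_left₀ (norm_nonneg _) (hq ⟨(x, u), hu⟩) 2
  have hpol (a b : E) : ⟪a + b, a - b⟫ = ‖a‖ ^ 2 - ‖b‖ ^ 2 := by
    rw [inner_add_left, inner_sub_right, inner_sub_right, real_inner_self_eq_norm_sq,
      real_inner_self_eq_norm_sq, real_inner_comm a b]
    ring
  rw [show (2 : ℝ)⁻¹ • (g + q) - x = (2 : ℝ)⁻¹ • ((g - (x + u)) + (q - (x - u))) by module,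
    show g - (2 : ℝ)⁻¹ • (g + q) - u = (2 : ℝ)⁻¹ • ((g - (x + u)) - (q - (x - u))) by module,
    real_inner_smul_left, real_inner_smul_right, hpol]
  have := sub_nonneg.2 hx
  positivity

end MaximalMonotone

theorem mem_rcomp_iff {L : H →L[ℝ] G} {B : G → Set G} {x u : H} :
    u ∈ rcomp L B x ↔ ∃ w, L (u + x) - w ∈ B w ∧ ContinuousLinearMap.adjoint L w = x := by
  simp only [rcomp, minusId, parComp, svInv, svComp, plusId, Set.mem_image, Set.mem_ofPred_eq]
  constructor
  · rintro ⟨z, ⟨w, ⟨v, hv, hvw⟩, hwx⟩, rfl⟩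
    refine ⟨w, ?_, hwx⟩
    rwa [sub_add_cancel, ← hvw, add_sub_cancel_right]
  · rintro ⟨w, hw, rfl⟩
    exact ⟨u + _, ⟨w, ⟨_, hw, sub_add_cancel _ _⟩, rfl⟩, add_sub_cancel_right _ _⟩

theorem rcomp_monotone {L : H →L[ℝ] G} (hL : ‖L‖ ≤ 1) {B : G → Set G} (hB : SVMonotone B) :
    SVMonotone (rcomp L B) := by
  intro x₁ u₁ x₂ u₂ h₁ h₂
  obtain ⟨w₁, hb₁, rfl⟩ := mem_rcomp_iff.1 h₁
  obtain ⟨w₂, hb₂, rfl⟩ := mem_rcomp_iff.1 h₂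
  set L' := ContinuousLinearMap.adjoint L
  have hmon := hB _ _ _ _ hb₁ hb₂
  have hL' : ‖L' (w₁ - w₂)‖ ≤ ‖w₁ - w₂‖ := by
    simpa only [one_mul] using
      L'.le_of_opNorm_le (c := 1) (by rwa [LinearIsometryEquiv.norm_map]) (w₁ - w₂)
  rw [show L (u₁ + L' w₁) - w₁ - (L (u₂ + L' w₂) - w₂) =
      L ((u₁ - u₂) + L' (w₁ - w₂)) - (w₁ - w₂) by simp only [map_sub, map_add]; abel,
    inner_sub_right, ← ContinuousLinearMap.adjoint_inner_left, inner_add_right,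
    real_inner_self_eq_norm_sq, real_inner_self_eq_norm_sq] at hmon
  rw [← map_sub]
  nlinarith [pow_le_pow_left₀ (norm_nonneg _) hL' 2]

/-- If `‖L‖ ≤ 1` and `B` is maximally monotone, then `L ▷ B` is maximally
monotone. -/
theorem rcomp_maxMonotone (L : H →L[ℝ] G) (hL : ‖L‖ ≤ 1) (B : G → Set G)
    (hB : SVMaxMonotone B) : SVMaxMonotone (rcomp L B) := by
  refine (rcomp_monotone hL hB.1).maxMonotone_of_exists_sub_mem fun g => ?_
  obtain ⟨w, hw⟩ := hB.exists_sub_mem (L g)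
  exact ⟨ContinuousLinearMap.adjoint L w, mem_rcomp_iff.2 ⟨w, by rwa [sub_add_cancel], rfl⟩⟩
end
end
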